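/- Pre-Iwasawa factorization: let S ∈ Sp(2n,ℝ) have block form S = ((A,B),(C,D)) with n×n blocks. Then DᵀD + BᵀB is symmetric positive definite; setting L = (DᵀD + BᵀB)^{1/2} and Q = −(CᵀD + AᵀB)(DᵀD + BᵀB)^{−1/2}, there exist real n×n matrices U and V with U + iV a complex unitary matrix such that S⁻¹ = ((L, 0),(Q, L⁻¹)) · ((U, −V),(V, U)). -/

import Mathlib

open Matrix

noncomputable section

open scoped ComplexOrder in
/-- The positive semidefinite square root of a positive semidefinite matrix
(the definition removed from Mathlib, restored with its old meaning). -/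
def Matrix.PosSemidef.sqrt {m : Type*} [Fintype m] [DecidableEq m] {𝕜 : Type*} [RCLike 𝕜]
    {A : Matrix m m 𝕜} (hA : A.PosSemidef) : Matrix m m 𝕜 :=
  hA.1.eigenvectorUnitary.1 * diagonal ((↑) ∘ (√·) ∘ hA.1.eigenvalues) *
    (star hA.1.eigenvectorUnitary : Matrix m m 𝕜)

/-- The standard symplectic matrix `J = ((0, I), (-I, 0))`. -/
def stdJ (n : ℕ) : Matrix (Fin n ⊕ Fin n) (Fin n ⊕ Fin n) ℝ :=
  Matrix.fromBlocks 0 1 (-1) 0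

/-- A real `2n × 2n` matrix is symplectic if `Sᵀ J S = J`. -/
def IsSymplectic {n : ℕ} (S : Matrix (Fin n ⊕ Fin n) (Fin n ⊕ Fin n) ℝ) : Prop :=
  Sᵀ * stdJ n * S = stdJ n

/-! The symplectic relations `BᵀD = DᵀB` and `AᵀD - CᵀB = 1` give `S⁻¹ = ((Dᵀ, -Bᵀ), (-Cᵀ, Aᵀ))`
and show that `D` and `B` have no common kernel vector, so `P = DᵀD + BᵀB` is positive definite.
With `L = P^{1/2}`, `U = L⁻¹Dᵀ` and `V = L⁻¹Bᵀ`, the real form `R = ((U, -V), (V, U))` of `U + iV`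
satisfies `R Rᵀ = L⁻¹ P L⁻¹ = 1`, so `U + iV` is unitary, and `S⁻¹ Rᵀ` is the lower triangular
matrix `((L, 0), (Q, L⁻¹))`; multiplying on the right by `R = (Rᵀ)⁻¹` gives the factorization. -/

namespace Matrix.PosSemidef

open scoped ComplexOrder

variable {m 𝕜 : Type*} [Fintype m] [DecidableEq m] [RCLike 𝕜] {A : Matrix m m 𝕜}

theorem sqrt_mul_self (hA : A.PosSemidef) : hA.sqrt * hA.sqrt = A := by
  set U : Matrix m m 𝕜 := hA.1.eigenvectorUnitary.1
  set d : Matrix m m 𝕜 := diagonal ((↑) ∘ (√·) ∘ hA.1.eigenvalues)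
  have hU : star U * U = 1 := Unitary.coe_star_mul_self _
  have hd : d * d = diagonal (RCLike.ofReal ∘ hA.1.eigenvalues) := by
    simp only [d, diagonal_mul_diagonal, Function.comp_apply, ← RCLike.ofReal_mul,
      Real.mul_self_sqrt (hA.eigenvalues_nonneg _)]
    rfl
  conv_rhs => rw [hA.1.spectral_theorem, Unitary.conjStarAlgAut_apply]
  calc hA.sqrt * hA.sqrt = U * d * (star U * U) * d * star U := by
        simp only [sqrt, U, d, mul_assoc]
    _ = _ := by rw [hU, mul_one, mul_assoc U, hd]

theorem isHermitian_sqrt (hA : A.PosSemidef) : hA.sqrt.IsHermitian := by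
  simp only [IsHermitian, sqrt, conjTranspose_mul, diagonal_conjTranspose, mul_assoc]
  simp only [← star_eq_conjTranspose, star_star]
  congr 3
  ext i
  simp

end Matrix.PosSemidef

section

variable {n : ℕ} {A B C D : Matrix (Fin n) (Fin n) ℝ}

theorem isSymplectic_fromBlocks_iff :
    IsSymplectic (fromBlocks A B C D) ↔
      Aᵀ * C = Cᵀ * A ∧ Bᵀ * D = Dᵀ * B ∧ Aᵀ * D - Cᵀ * B = 1 := by
  rw [IsSymplectic, stdJ, fromBlocks_transpose, fromBlocks_multiply, fromBlocks_multiply,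
    fromBlocks_inj]
  simp only [mul_zero, mul_one, mul_neg_one, zero_add, add_zero, neg_mul, neg_add_eq_sub,
    sub_eq_zero]
  have hDA : Bᵀ * C - Dᵀ * A = -1 ↔ Aᵀ * D - Cᵀ * B = 1 := by
    rw [← neg_sub, neg_inj, ← transpose_inj]
    simp [transpose_sub, transpose_mul]
  rw [hDA]
  tauto

theorem IsSymplectic.inv_fromBlocks (hS : IsSymplectic (fromBlocks A B C D)) :
    (fromBlocks A B C D)⁻¹ = fromBlocks Dᵀ (-Bᵀ) (-Cᵀ) Aᵀ := by
  obtain ⟨hAC, hBD, hAD⟩ := isSymplectic_fromBlocks_iff.mp hS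
  have hDA : Dᵀ * A - Bᵀ * C = 1 := by
    simpa [transpose_sub, transpose_mul] using congrArg transpose hAD
  refine inv_eq_left_inv ?_
  rw [fromBlocks_multiply, ← fromBlocks_one]
  congr 1 <;> simp only [neg_mul, neg_add_eq_sub, ← sub_eq_add_neg, sub_eq_zero]
  exacts [hDA, hBD.symm, hAC, hAD]

end

theorem Matrix.posDef_transpose_mul_add_transpose_mul {m n : Type*} [Fintype m] [Fintype n]
    [DecidableEq n] {B D : Matrix m n ℝ} {X Y : Matrix n m ℝ} (h : X * D - Y * B = 1) :
    (Dᵀ * D + Bᵀ * B).PosDef := by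
  have hleft : fromCols X (-Y) * fromRows D B = 1 := by
    rw [fromCols_mul_fromRows, Matrix.neg_mul, ← sub_eq_add_neg, h]
  have hinj : Function.Injective (fromRows D B).mulVec := fun x y hxy => by
    simpa only [mulVec_mulVec, hleft, one_mulVec] using congrArg (fromCols X (-Y) *ᵥ ·) hxy
  have hpos := PosDef.conjTranspose_mul_self _ hinj
  rwa [conjTranspose_eq_transpose_of_trivial, transpose_fromRows, fromCols_mul_fromRows] at hpos

section

variable {m : Type*} [Fintype m] [DecidableEq m]

theorem Matrix.star_mul_self_eq_one_of_fromBlocks {U V : Matrix m m ℝ}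
    (h : (fromBlocks U (-V) V U)ᵀ * fromBlocks U (-V) V U = 1) :
    star (U.map Complex.ofReal + Complex.I • V.map Complex.ofReal) *
      (U.map Complex.ofReal + Complex.I • V.map Complex.ofReal) = 1 := by
  rw [fromBlocks_transpose, fromBlocks_multiply, ← fromBlocks_one, fromBlocks_inj] at h
  obtain ⟨h11, h12, -, -⟩ := h
  let φ := (Complex.ofRealHom : ℝ →+* ℂ).mapMatrix (m := m)
  have hstar (M : Matrix m m ℝ) : star (φ M) = φ Mᵀ := by
    ext i j
    simp [φ]
  have key : star (U.map Complex.ofReal + Complex.I • V.map Complex.ofReal) *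
      (U.map Complex.ofReal + Complex.I • V.map Complex.ofReal) =
      φ (Uᵀ * U + Vᵀ * V) + Complex.I • φ (Uᵀ * V - Vᵀ * U) := by
    change star (φ U + Complex.I • φ V) * (φ U + Complex.I • φ V) = _
    simp only [star_add, star_smul, hstar, Complex.star_def, Complex.conj_I, map_add, map_sub,
      map_mul, add_mul, mul_add, smul_mul_assoc, mul_smul_comm, smul_add, smul_smul, mul_neg,
      Complex.I_mul_I]
    module
  have hUV : Uᵀ * V - Vᵀ * U = 0 := by
    rw [← neg_eq_zero, ← h12]; noncomm_ring
  rw [key, h11, hUV, map_one, map_zero, smul_zero, add_zero]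

variable {A B C D L : Matrix m m ℝ}

theorem fromBlocks_inv_mul_mul_transpose_eq_one (hL : IsUnit L.det) (hLs : L.IsSymm)
    (hLL : L * L = Dᵀ * D + Bᵀ * B) (hBD : Bᵀ * D = Dᵀ * B) :
    fromBlocks (L⁻¹ * Dᵀ) (-(L⁻¹ * Bᵀ)) (L⁻¹ * Bᵀ) (L⁻¹ * Dᵀ) *
      (fromBlocks (L⁻¹ * Dᵀ) (-(L⁻¹ * Bᵀ)) (L⁻¹ * Bᵀ) (L⁻¹ * Dᵀ))ᵀ = 1 := by
  have hP : L⁻¹ * (Dᵀ * D + Bᵀ * B) * L⁻¹ = 1 := by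
    rw [← hLL, ← mul_assoc, nonsing_inv_mul L hL, one_mul, mul_nonsing_inv L hL]
  have hBD' : L⁻¹ * (Bᵀ * D - Dᵀ * B) * L⁻¹ = 0 := by
    rw [hBD, sub_self, mul_zero, zero_mul]
  rw [fromBlocks_transpose, fromBlocks_multiply, ← fromBlocks_one]
  simp only [transpose_mul, transpose_neg, transpose_transpose, transpose_nonsing_inv, hLs.eq]
  congr 1
  · rw [← hP]; noncomm_ring
  · rw [← neg_zero, ← hBD']; noncomm_ring
  · rw [← hBD']; noncomm_ring
  · rw [← hP]; noncomm_ring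

theorem fromBlocks_eq_triangular_mul_orthogonal (hL : IsUnit L.det) (hLs : L.IsSymm)
    (hLL : L * L = Dᵀ * D + Bᵀ * B) (hBD : Bᵀ * D = Dᵀ * B) (hAD : Aᵀ * D - Cᵀ * B = 1) :
    fromBlocks Dᵀ (-Bᵀ) (-Cᵀ) Aᵀ =
      fromBlocks L 0 (-(Cᵀ * D + Aᵀ * B) * L⁻¹) L⁻¹ *
        fromBlocks (L⁻¹ * Dᵀ) (-(L⁻¹ * Bᵀ)) (L⁻¹ * Bᵀ) (L⁻¹ * Dᵀ) := by
  set R := fromBlocks (L⁻¹ * Dᵀ) (-(L⁻¹ * Bᵀ)) (L⁻¹ * Bᵀ) (L⁻¹ * Dᵀ)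
  have hRtR : Rᵀ * R = 1 := mul_eq_one_comm.mp (fromBlocks_inv_mul_mul_transpose_eq_one hL hLs hLL hBD)
  have hLinv : L * L⁻¹ = 1 := mul_nonsing_inv L hL
  have hT : fromBlocks Dᵀ (-Bᵀ) (-Cᵀ) Aᵀ * Rᵀ = fromBlocks L 0 (-(Cᵀ * D + Aᵀ * B) * L⁻¹) L⁻¹ := by
    rw [fromBlocks_transpose, fromBlocks_multiply]
    simp only [transpose_mul, transpose_neg, transpose_transpose, transpose_nonsing_inv, hLs.eq]
    congr 1
    · calc _ = (Dᵀ * D + Bᵀ * B) * L⁻¹ := by noncomm_ring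
        _ = L := by rw [← hLL, mul_assoc, hLinv, mul_one]
    · calc _ = (Dᵀ * B - Bᵀ * D) * L⁻¹ := by noncomm_ring
        _ = 0 := by rw [hBD, sub_self, zero_mul]
    · noncomm_ring
    · calc _ = (Aᵀ * D - Cᵀ * B) * L⁻¹ := by noncomm_ring
        _ = L⁻¹ := by rw [hAD, one_mul]
  rw [← hT, mul_assoc, hRtR, mul_one]

end

theorem pre_iwasawa_factorization_general {n : ℕ}
    (S : Matrix (Fin n ⊕ Fin n) (Fin n ⊕ Fin n) ℝ) (hS : IsSymplectic S)
    (A B C D : Matrix (Fin n) (Fin n) ℝ) (hblocks : S = Matrix.fromBlocks A B C D) :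
    ∃ hP : (Dᵀ * D + Bᵀ * B).PosDef,
      ∃ U V : Matrix (Fin n) (Fin n) ℝ,
        star (U.map (Complex.ofReal) + Complex.I • V.map (Complex.ofReal)) *
            (U.map (Complex.ofReal) + Complex.I • V.map (Complex.ofReal)) = 1 ∧
        S⁻¹ = Matrix.fromBlocks hP.posSemidef.sqrt 0
            (-(Cᵀ * D + Aᵀ * B) * hP.posSemidef.sqrt⁻¹) hP.posSemidef.sqrt⁻¹ *
          Matrix.fromBlocks U (-V) V U := by
  subst hblocks
  obtain ⟨-, hBD, hAD⟩ := isSymplectic_fromBlocks_iff.mp hS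
  have hP : (Dᵀ * D + Bᵀ * B).PosDef := posDef_transpose_mul_add_transpose_mul hAD
  set L := hP.posSemidef.sqrt
  have hLL : L * L = Dᵀ * D + Bᵀ * B := hP.posSemidef.sqrt_mul_self
  have hLs : L.IsSymm := isHermitian_iff_isSymm.mp hP.posSemidef.isHermitian_sqrt
  have hL : IsUnit L.det :=
    (isUnit_iff_isUnit_det L).mp (isUnit_of_mul_isUnit_left (hLL ▸ hP.isUnit))
  have hR := fromBlocks_inv_mul_mul_transpose_eq_one hL hLs hLL hBD
  refine ⟨hP, L⁻¹ * Dᵀ, L⁻¹ * Bᵀ, star_mul_self_eq_one_of_fromBlocks (mul_eq_one_comm.mp hR), ?_⟩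
  rw [hS.inv_fromBlocks, fromBlocks_eq_triangular_mul_orthogonal hL hLs hLL hBD hAD]

/-- Pre-Iwasawa factorization: for a symplectic `S = ((A,B),(C,D))`, the matrix
`DᵀD + BᵀB` is positive definite, and with `L = (DᵀD + BᵀB)^{1/2}` and
`Q = -(CᵀD + AᵀB)(DᵀD + BᵀB)^{-1/2}` there are real matrices `U, V` with `U + iV`
unitary such that `S⁻¹ = ((L, 0), (Q, L⁻¹)) * ((U, -V), (V, U))`. -/
theorem pre_iwasawa_factorization {n : ℕ} (hn : 1 ≤ n)
    (S : Matrix (Fin n ⊕ Fin n) (Fin n ⊕ Fin n) ℝ) (hS : IsSymplectic S)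
    (A B C D : Matrix (Fin n) (Fin n) ℝ) (hblocks : S = Matrix.fromBlocks A B C D) :
    ∃ hP : (Dᵀ * D + Bᵀ * B).PosDef,
      ∃ U V : Matrix (Fin n) (Fin n) ℝ,
        star (U.map (Complex.ofReal) + Complex.I • V.map (Complex.ofReal)) *
            (U.map (Complex.ofReal) + Complex.I • V.map (Complex.ofReal)) = 1 ∧
        S⁻¹ = Matrix.fromBlocks hP.posSemidef.sqrt 0
            (-(Cᵀ * D + Aᵀ * B) * hP.posSemidef.sqrt⁻¹) hP.posSemidef.sqrt⁻¹ *
          Matrix.fromBlocks U (-V) V U :=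
  pre_iwasawa_factorization_general S hS A B C D hblocks
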